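/- arXiv:2511.19964 — 6 statements merged into one kernel-verified Lean document; each statement's English description precedes it below -/
import Mathlib

section
/- Let a ∈ (0,1), p > 0, p' ∈ ℝ, R ∈ ℝ, and c > 0. Set L := −ln a > 0 and m := min{1,c}·p, and define F := −a^p·(−p'·L + p·R) and F_c := −a^{c·p}·(−c·p'·L + c·p·R). Then |F_c − F| ≤ (|c−1|/e)·[ (p/m)·(|p'|·L + p·|R|) + |p'|/m + (p/(L·m))·|R| ]. -/
/-!
With `S = -p' L + p R` one has `F_c - F = -(c a^{cp} - a^p) S`, and
`c a^{cp} - a^p = (a^{cp} - a^p) + (c - 1) a^{cp}`. Since `|d/dt a^t| = L a^t` is decreasing in `t`,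
the mean value theorem gives `|a^{cp} - a^p| ≤ |c - 1| p L a^m` with `m = min (cp) p`, and
`a^{cp} ≤ a^m`. Everything is then controlled by `t e^{-t} ≤ 1/e` at `t = mL`, in the two forms
`L a^m ≤ 1/(e m)` and `a^m ≤ 1/(e m L)`.
-/

open Real

theorem Real.abs_exp_sub_exp_le (x y : ℝ) : |exp x - exp y| ≤ |x - y| * exp (max x y) := by
  wlog hyx : y ≤ x generalizing x y
  · simpa only [abs_sub_comm, max_comm] using this y x (le_of_not_ge hyx)
  have key : exp x - exp y = exp x * (1 - exp (-(x - y))) := by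
    rw [mul_sub, ← exp_add]; ring_nf
  rw [max_eq_left hyx, key, abs_mul, abs_of_pos (exp_pos x), mul_comm _ (exp x),
    abs_of_nonneg (sub_nonneg.2 hyx), abs_of_nonneg (sub_nonneg.2 (exp_le_one_iff.2 (by linarith)))]
  exact mul_le_mul_of_nonneg_left (by linarith [one_sub_le_exp_neg (x - y)]) (exp_pos x).le

theorem Real.abs_rpow_sub_rpow_le {a : ℝ} (ha0 : 0 < a) (ha1 : a ≤ 1) (x y : ℝ) :
    |a ^ x - a ^ y| ≤ |x - y| * (-log a * a ^ min x y) := by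
  have hlog : log a ≤ 0 := log_nonpos ha0.le ha1
  have hmax : max (log a * x) (log a * y) = log a * min x y :=
    (Antitone.map_min (f := (log a * ·)) fun _ _ h ↦ mul_le_mul_of_nonpos_left h hlog).symm
  have h := abs_exp_sub_exp_le (log a * x) (log a * y)
  rw [hmax, ← mul_sub, abs_mul, abs_of_nonpos hlog] at h
  simpa only [rpow_def_of_pos ha0, mul_left_comm, mul_assoc] using h

theorem Real.neg_log_mul_rpow_le {a m : ℝ} (ha : 0 < a) (hm : 0 < m) :
    -log a * a ^ m ≤ exp (-1) / m := by
  rw [le_div_iff₀ hm]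
  have h := mul_exp_neg_le_exp_neg_one (-(log a * m))
  rwa [neg_neg, ← rpow_def_of_pos ha, ← neg_mul, mul_right_comm] at h

/-- Pointwise control of `f'_c − f'` when the detection threshold `p` is
scaled by a factor `c > 0`.  Here `a ∈ (0,1)`, `L = −ln a`, `m = min{1,c}·p`,
`F = −a^p(−p'L + pR)` and `F_c = −a^{cp}(−cp'L + cpR)`. -/
theorem msce_pointwise_scaling_bound
    (a p p' R c : ℝ) (ha : a ∈ Set.Ioo (0 : ℝ) 1) (hp : 0 < p) (hc : 0 < c) :
    |(-(a ^ (c * p)) * (-(c * p') * (-Real.log a) + (c * p) * R)) -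
      (-(a ^ p) * (-p' * (-Real.log a) + p * R))| ≤
    (|c - 1| / Real.exp 1) *
      ((p / (min 1 c * p)) * (|p'| * (-Real.log a) + p * |R|) +
        |p'| / (min 1 c * p) +
        (p / ((-Real.log a) * (min 1 c * p))) * |R|) := by
  obtain ⟨ha0, ha1⟩ := ha
  have hL : 0 < -log a := neg_pos.2 (log_neg ha0 ha1)
  have hm : 0 < min 1 c * p := mul_pos (lt_min one_pos hc) hp
  have hmin : min (c * p) p = min 1 c * p := by
    rw [min_comm 1 c, min_mul_of_nonneg _ _ hp.le, one_mul]
  set L := -log a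
  set m := min 1 c * p
  have hdiff : |a ^ (c * p) - a ^ p| ≤ |c - 1| * p * (L * a ^ m) := by
    have h := abs_rpow_sub_rpow_le ha0 ha1.le (c * p) p
    rwa [hmin, ← sub_one_mul, abs_mul, abs_of_pos hp] at h
  have hcp : a ^ (c * p) ≤ a ^ m :=
    rpow_le_rpow_of_exponent_ge ha0 ha1.le (hmin ▸ min_le_left _ _)
  have hS : |-p' * L + p * R| ≤ |p'| * L + p * |R| := by
    simpa only [abs_mul, abs_neg, abs_of_pos hL, abs_of_pos hp] using abs_add_le (-p' * L) (p * R)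
  have hLM : L * a ^ m ≤ exp (-1) / m := neg_log_mul_rpow_le ha0 hm
  have hM : a ^ m ≤ exp (-1) / (L * m) := by
    rw [mul_comm L, ← div_div, le_div_iff₀ hL, mul_comm]; exact hLM
  calc _ = |(a ^ (c * p) - a ^ p) + (c - 1) * a ^ (c * p)| * |-p' * L + p * R| := by
        rw [← abs_mul, ← abs_neg]; congr 1; ring
    _ ≤ (|a ^ (c * p) - a ^ p| + |c - 1| * a ^ (c * p)) * |-p' * L + p * R| := by
        gcongr
        exact (abs_add_le _ _).trans_eq (by rw [abs_mul, abs_of_pos (rpow_pos_of_pos ha0 _)])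
    _ ≤ (|c - 1| * p * (L * a ^ m) + |c - 1| * a ^ m) * (|p'| * L + p * |R|) := by gcongr
    _ = |c - 1| * (p * (L * a ^ m) * (|p'| * L + p * |R|) + |p'| * (L * a ^ m) +
          p * |R| * a ^ m) := by ring
    _ ≤ |c - 1| * (p * (exp (-1) / m) * (|p'| * L + p * |R|) + |p'| * (exp (-1) / m) +
          p * |R| * (exp (-1) / (L * m))) := by gcongr
    _ = _ := by rw [exp_neg]; field_simp
end

section
/- Let [t_a,t_b] be a window, A < 0, and K : ℝ×ℝ → ℝ bounded on [t_a,t_b]² with sup-norm ‖K‖. Let p : [t_a,t_b] → ℝ with 0 < p_min ≤ p(r) ≤ M_p and |p'(r)| ≤ M_{p'} for all r, let ε1, ε2, C1, C2 ≥ 0 and c > 0, and let g, g_c : [t_a,t_b] → ℝ be integrable functions satisfying the pointwise bound |g_c(r) − g(r)| ≤ |c−1|·[ C1·(|p'(r)|·ε1 + p(r)·ε2) + C2/p(r) ] for all r ∈ [t_a,t_b]. Suppose h, h_c : [t_a,t_b] → ℝ are differentiable with h_c(t_a) = h(t_a) and h_c'(t) − h'(t) = A·∫_{t_a}^t K(t,r)·(g_c(r)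 − g(r)) dr for all t ∈ [t_a,t_b]. Then sup_{t∈[t_a,t_b]} |h_c(t) − h(t)| ≤ |c−1|·|A|·‖K‖·(t_b−t_a)²·[ C1·(M_{p'}·ε1 + M_p·ε2) + C2/p_min ]. -/
open MeasureTheory intervalIntegral

/-- Insensitivity of the MSCE-T hazard to scaling the detection threshold:
if the derivatives of the two detection functions satisfy the pointwise
bound and the hazards satisfy the Volterra relation, then
`sup |h_c − h| ≤ |c−1| |A| ‖K‖ (t_b−t_a)² [C1(M_{p'}ε1 + M_p ε2) + C2/p_min]`. -/
theorem msce_threshold_scaling_insensitivity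
    (ta tb A : ℝ) (hab : ta ≤ tb) (hA : A < 0)
    (K : ℝ → ℝ → ℝ) (Knorm : ℝ)
    (hKb : ∀ t ∈ Set.Icc ta tb, ∀ r ∈ Set.Icc ta tb, |K t r| ≤ Knorm)
    (p p' : ℝ → ℝ) (pmin Mp Mp' : ℝ) (hpmin : 0 < pmin)
    (hp : ∀ r ∈ Set.Icc ta tb, pmin ≤ p r ∧ p r ≤ Mp)
    (hp' : ∀ r ∈ Set.Icc ta tb, |p' r| ≤ Mp')
    (ε1 ε2 C1 C2 c : ℝ) (hε1 : 0 ≤ ε1) (hε2 : 0 ≤ ε2)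
    (hC1 : 0 ≤ C1) (hC2 : 0 ≤ C2) (hc : 0 < c)
    (g gc : ℝ → ℝ)
    (hgint : IntervalIntegrable g volume ta tb)
    (hgcint : IntervalIntegrable gc volume ta tb)
    (hptw : ∀ r ∈ Set.Icc ta tb,
      |gc r - g r| ≤ |c - 1| * (C1 * (|p' r| * ε1 + p r * ε2) + C2 / p r))
    (h h_c : ℝ → ℝ)
    (hdiff : ∀ t ∈ Set.Icc ta tb, DifferentiableAt ℝ h t ∧ DifferentiableAt ℝ h_c t)
    (hinit : h_c ta = h ta)
    (hvolt : ∀ t ∈ Set.Icc ta tb,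
      deriv h_c t - deriv h t = A * ∫ r in ta..t, K t r * (gc r - g r)) :
    ∀ t ∈ Set.Icc ta tb,
      |h_c t - h t| ≤
        |c - 1| * |A| * Knorm * (tb - ta) ^ 2 *
          (C1 * (Mp' * ε1 + Mp * ε2) + C2 / pmin) := by
  intro t ht
  have hta : ta ∈ Set.Icc ta tb := ⟨le_refl _, hab⟩
  have hKnn : 0 ≤ Knorm := le_trans (abs_nonneg _) (hKb ta hta ta hta)
  have hMp' : 0 ≤ Mp' := le_trans (abs_nonneg _) (hp' ta hta)
  have hMp : 0 ≤ Mp := hpmin.le.trans ((hp ta hta).1.trans (hp ta hta).2)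
  set B : ℝ := C1 * (Mp' * ε1 + Mp * ε2) + C2 / pmin with hB
  have hBnn : 0 ≤ B := by positivity
  -- pointwise bound on the difference, uniform
  have hptw' : ∀ r ∈ Set.Icc ta tb, |gc r - g r| ≤ |c - 1| * B := by
    intro r hr
    refine (hptw r hr).trans ?_
    have h1 := (hp r hr).1
    have h2 := (hp r hr).2
    have h3 := hp' r hr
    have hpr : 0 < p r := lt_of_lt_of_le hpmin h1
    have hle : C1 * (|p' r| * ε1 + p r * ε2) + C2 / p r ≤ B := by
      have hd : C2 / p r ≤ C2 / pmin := div_le_div_of_nonneg_left hC2 hpmin h1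
      have hm : C1 * (|p' r| * ε1 + p r * ε2) ≤ C1 * (Mp' * ε1 + Mp * ε2) :=
        mul_le_mul_of_nonneg_left
          (add_le_add (mul_le_mul_of_nonneg_right h3 hε1)
            (mul_le_mul_of_nonneg_right h2 hε2)) hC1
      exact add_le_add hm hd
    exact mul_le_mul_of_nonneg_left hle (abs_nonneg _)
  -- bound on the Volterra integral
  set C : ℝ := |A| * (Knorm * (|c - 1| * B)) * (tb - ta) with hC
  have hCnn : 0 ≤ C :=
    mul_nonneg (mul_nonneg (abs_nonneg _)
      (mul_nonneg hKnn (mul_nonneg (abs_nonneg _) hBnn))) (by linarith)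
  have hderiv : ∀ x ∈ Set.Icc ta tb, ‖deriv (fun t => h_c t - h t) x‖ ≤ C := by
    intro x hx
    have hdx : deriv (fun t => h_c t - h t) x = deriv h_c x - deriv h x :=
      deriv_sub (hdiff x hx).2 (hdiff x hx).1
    rw [Real.norm_eq_abs, hdx, hvolt x hx, abs_mul]
    have hint : ‖∫ r in ta..x, K x r * (gc r - g r)‖ ≤
        Knorm * (|c - 1| * B) * |x - ta| := by
      apply intervalIntegral.norm_integral_le_of_norm_le_const
      intro r hr
      have hr' : r ∈ Set.Icc ta tb := by
        rw [Set.uIoc_of_le hx.1] at hr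
        exact ⟨hr.1.le, hr.2.trans hx.2⟩
      rw [Real.norm_eq_abs, abs_mul]
      exact mul_le_mul (hKb x hx r hr') (hptw' r hr') (abs_nonneg _) hKnn
    calc |A| * ‖∫ r in ta..x, K x r * (gc r - g r)‖
        ≤ |A| * (Knorm * (|c - 1| * B) * |x - ta|) := by
          exact mul_le_mul_of_nonneg_left hint (abs_nonneg _)
      _ ≤ |A| * (Knorm * (|c - 1| * B) * (tb - ta)) := by
          have hx' : |x - ta| ≤ tb - ta := by
            rw [abs_of_nonneg (by linarith [hx.1])]
            linarith [hx.2]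
          exact mul_le_mul_of_nonneg_left
            (mul_le_mul_of_nonneg_left hx' (by positivity)) (abs_nonneg _)
      _ = C := by ring
  -- mean value inequality
  have hdiffD : ∀ x ∈ Set.Icc ta tb, DifferentiableAt ℝ (fun t => h_c t - h t) x :=
    fun x hx => ((hdiff x hx).2.sub (hdiff x hx).1)
  have hmvt := (convex_Icc ta tb).norm_image_sub_le_of_norm_deriv_le
      hdiffD hderiv hta ht
  rw [hinit, sub_self, sub_zero, Real.norm_eq_abs] at hmvt
  calc |h_c t - h t| ≤ C * ‖t - ta‖ := hmvt
    _ ≤ C * (tb - ta) := by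
        gcongr
        rw [Real.norm_eq_abs, abs_of_nonneg (by linarith [ht.1])]
        linarith [ht.2]
    _ = |c - 1| * |A| * Knorm * (tb - ta) ^ 2 * B := by ring
end

section
/- Let α1, β1 ≥ 0, let x5 : ℝ → ℝ be continuous with x5(t) ∈ (0,1] for all t, and let μ1, μ̃1 : ℝ → ℝ be nonnegative piecewise-continuous functions with μ̃1(t) ≥ μ1(t) for t ∈ [t_a,t_b] and μ̃1(t) = μ1(t) for t ∉ [t_a,t_b]. Let x3, x̃3 : [t_a,∞) → [0,1] be differentiable solutions of x' = β1 − (α1+β1+μ(t))·x + μ(t)·x·x5(t) + α1·x² with μ = μ1 and μ = μ̃1 respectively, and with x̃3(t_a) = x3(t_a). Then x̃3(t) ≤ x3(t) for all t ≥ t_a. -/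
/-- Comparison lemma for the survival probability `x3` of the MSCE-T model:
increasing the mutation rate `μ1` on a window `[t_a, t_b]` can only decrease
`x3` for all subsequent times. -/
theorem msce_mu1_comparison
    (α1 β1 ta tb : ℝ) (hα1 : 0 ≤ α1) (hβ1 : 0 ≤ β1) (hab : ta ≤ tb)
    (x5 μ1 μt1 : ℝ → ℝ)
    (hx5c : Continuous x5) (hx5 : ∀ t, x5 t ∈ Set.Ioc (0 : ℝ) 1)
    (hμ1nn : ∀ t, 0 ≤ μ1 t) (hμt1nn : ∀ t, 0 ≤ μt1 t)
    (hge : ∀ t ∈ Set.Icc ta tb, μ1 t ≤ μt1 t)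
    (heq : ∀ t ∉ Set.Icc ta tb, μt1 t = μ1 t)
    (x3 xt3 : ℝ → ℝ)
    (hx3mem : ∀ t, ta ≤ t → x3 t ∈ Set.Icc (0 : ℝ) 1)
    (hxt3mem : ∀ t, ta ≤ t → xt3 t ∈ Set.Icc (0 : ℝ) 1)
    (hx3d : ∀ t, ta ≤ t → HasDerivAt x3
      (β1 - (α1 + β1 + μ1 t) * x3 t + μ1 t * x3 t * x5 t + α1 * (x3 t) ^ 2) t)
    (hxt3d : ∀ t, ta ≤ t → HasDerivAt xt3
      (β1 - (α1 + β1 + μt1 t) * xt3 t + μt1 t * xt3 t * x5 t + α1 * (xt3 t) ^ 2) t)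
    (hinit : xt3 ta = x3 ta) :
    ∀ t, ta ≤ t → xt3 t ≤ x3 t := by
  -- the ordering of the mutation rates holds everywhere
  have hge' : ∀ t, μ1 t ≤ μt1 t := by
    intro t
    by_cases ht : t ∈ Set.Icc ta tb
    · exact hge t ht
    · rw [heq t ht]
  set y : ℝ → ℝ := fun s => xt3 s - x3 s with hy
  -- derivative of y
  have hyd : ∀ u, ta ≤ u → HasDerivAt y
      ((β1 - (α1 + β1 + μt1 u) * xt3 u + μt1 u * xt3 u * x5 u + α1 * (xt3 u) ^ 2)
       - (β1 - (α1 + β1 + μ1 u) * x3 u + μ1 u * x3 u * x5 u + α1 * (x3 u) ^ 2)) u :=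
    fun u hu => (hxt3d u hu).sub (hx3d u hu)
  have hycont : ContinuousOn y (Set.Ici ta) := fun u hu =>
    ((hyd u hu).continuousAt).continuousWithinAt
  -- key derivative bound when y ≥ 0
  have hbound : ∀ u, ta ≤ u → 0 ≤ y u →
      ((β1 - (α1 + β1 + μt1 u) * xt3 u + μt1 u * xt3 u * x5 u + α1 * (xt3 u) ^ 2)
       - (β1 - (α1 + β1 + μ1 u) * x3 u + μ1 u * x3 u * x5 u + α1 * (x3 u) ^ 2))
      ≤ (2 * α1) * y u + 0 := by
    intro u hu hy0
    have h3 := hx3mem u hu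
    have ht3 := hxt3mem u hu
    have h5 := hx5 u
    have hμ := hge' u
    have hμn := hμ1nn u
    have hμtn := hμt1nn u
    simp only [Set.mem_Icc, Set.mem_Ioc] at h3 ht3 h5
    simp only [hy] at hy0 ⊢
    nlinarith [mul_nonneg (mul_nonneg hμtn hy0) (sub_nonneg.2 h5.2),
      mul_nonneg (mul_nonneg (sub_nonneg.2 hμ) h3.1) (sub_nonneg.2 h5.2),
      mul_nonneg (mul_nonneg hα1 hy0) (by linarith [ht3.2, h3.2] : (0:ℝ) ≤ 2 - (xt3 u + x3 u)),
      mul_nonneg (add_nonneg hα1 hβ1) hy0]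
  intro t ht
  by_contra hcon
  push_neg at hcon
  have hyt : 0 < y t := by simp only [hy]; linarith
  -- the set of times in [ta, t] where y ≤ 0
  set S : Set ℝ := {u | u ∈ Set.Icc ta t ∧ y u ≤ 0} with hS
  have hta_mem : ta ∈ S := ⟨⟨le_refl ta, ht⟩, by simp [hy, hinit]⟩
  have hSne : S.Nonempty := ⟨ta, hta_mem⟩
  have hSbdd : BddAbove S := ⟨t, fun u hu => hu.1.2⟩
  set s := sSup S with hs
  have hsIcc : s ∈ Set.Icc ta t :=
    ⟨le_csSup hSbdd hta_mem, csSup_le hSne fun u hu => hu.1.2⟩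
  have hsS : s ∈ S := by
    have hclosed : IsClosed S := by
      have : S = Set.Icc ta t ∩ (Set.Icc ta t ∩ y ⁻¹' Set.Iic 0) := by
        ext u
        simp only [hS, Set.mem_setOf_eq, Set.mem_inter_iff, Set.mem_preimage, Set.mem_Iic]
        tauto
      rw [this]
      exact isClosed_Icc.inter
        ((hycont.mono (fun u hu => hu.1)).preimage_isClosed_of_isClosed
          isClosed_Icc isClosed_Iic)
    exact hclosed.csSup_mem hSne hSbdd
  have hst : s < t := lt_of_le_of_ne hsIcc.2 (fun h => by
    have := hsS.2; rw [h] at this; linarith)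
  -- strictly past s, y is positive
  have hpos : ∀ u, s < u → u ≤ t → 0 < y u := by
    intro u hsu hut
    by_contra hle
    push_neg at hle
    have : u ∈ S := ⟨⟨le_trans hsIcc.1 hsu.le, hut⟩, hle⟩
    exact absurd (le_csSup hSbdd this) (not_le.2 hsu)
  -- y s = 0 (≤ 0 from membership, ≥ 0 by right continuity)
  have hys0 : 0 ≤ y s := by
    have hca : ContinuousAt y s := (hyd s hsIcc.1).continuousAt
    have hcw : ContinuousWithinAt y (Set.Ioc s t) s := hca.continuousWithinAt
    have hne : (nhdsWithin s (Set.Ioc s t)).NeBot := by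
      apply mem_closure_iff_nhdsWithin_neBot.1
      rw [closure_Ioc (ne_of_lt hst)]
      exact Set.left_mem_Icc.2 hst.le
    exact ge_of_tendsto hcw (Filter.eventually_of_mem self_mem_nhdsWithin
      (fun u hu => (hpos u hu.1 hu.2).le))
  -- apply Grönwall on [s, t]
  have key := le_gronwallBound_of_liminf_deriv_right_le
    (f := y)
    (f' := fun u => (β1 - (α1 + β1 + μt1 u) * xt3 u + μt1 u * xt3 u * x5 u + α1 * (xt3 u) ^ 2)
       - (β1 - (α1 + β1 + μ1 u) * x3 u + μ1 u * x3 u * x5 u + α1 * (x3 u) ^ 2))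
    (δ := 0) (K := 2 * α1) (ε := 0) (a := s) (b := t)
    (hycont.mono (fun u hu => le_trans hsIcc.1 hu.1))
    (fun u hu r hr => by
      have hd : HasDerivWithinAt y _ (Set.Ici u) u :=
        (hyd u (le_trans hsIcc.1 hu.1)).hasDerivWithinAt
      exact hd.liminf_right_slope_le hr)
    (le_of_eq (by
      have : y s ≤ 0 := hsS.2
      linarith))
    (fun u hu => by
      have hyu : 0 ≤ y u := by
        rcases eq_or_lt_of_le hu.1 with h | h
        · rw [← h]; exact hys0
        · exact (hpos u h hu.2.le).le
      exact hbound u (le_trans hsIcc.1 hu.1) hyu)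
  have := key t ⟨hst.le, le_refl t⟩
  rw [gronwallBound_ε0_δ0] at this
  linarith
end

section
/- Let α1 > 0, β1, μ1 ≥ 0, Δβ > 0, and let x5 : ℝ → [0,1] be continuous. For β ∈ ℝ set f3(x; t, β) := β − (α1+β+μ1)·x + μ1·x·x5(t) + α1·x². Let x3_base and x3_new be differentiable functions on [t_b,∞) taking values in [0,1], with x3_new(t_b) = x3_base(t_b), satisfying x3_base'(t) = f3(x3_base(t); t, β1) and x3_new'(t) = f3(x3_new(t); t, β1 − Δβ). Let L > 0 be a Lipschitz constant for x ↦ f3(x; t, β1) on [0,1], uniform in t. Define c_base(t) := α1·(2·x3_base(t) − 1) − β1 + μ1·(x5(t) − 1) and c_new(t) := α1·(2·x3_new(t) − 1) − (β1 − Δβ) + μ1·(x5(t) − 1), and suppose c_base is right-continuous at t_b with right-limit c_base(t_b⁺) satisfying c_base(t_b⁺) + Δβ/2 > 0. Then: (i) |x3_new(t) − x3_base(t)| ≤ (Δβ/L)·(e^{L·(t−t_b)} − 1) for t ≥ t_b; and (ii) there exists δ > 0 such that c_new(t) > 0 for all t ∈ (t_b, t_b + δ]. -/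
open Filter

/-- Rebound proposition: lowering the first-stage death rate `β1` by `Δβ` at
`t_b⁺` gives (i) a Grönwall bound on the induced change of `x3`, and (ii) a
short post-window interval on which the new coefficient `c_new` is positive. -/
theorem msce_rebound_beta
    (α1 β1 μ1 Δβ tb L : ℝ) (hα1 : 0 < α1) (hβ1 : 0 ≤ β1) (hμ1 : 0 ≤ μ1)
    (hΔβ : 0 < Δβ) (hL : 0 < L)
    (x5 : ℝ → ℝ) (hx5c : Continuous x5) (hx5 : ∀ t, x5 t ∈ Set.Icc (0 : ℝ) 1)
    (xb xn : ℝ → ℝ)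
    (hxbmem : ∀ t, tb ≤ t → xb t ∈ Set.Icc (0 : ℝ) 1)
    (hxnmem : ∀ t, tb ≤ t → xn t ∈ Set.Icc (0 : ℝ) 1)
    (hinit : xn tb = xb tb)
    (hxbd : ∀ t, tb ≤ t → HasDerivAt xb
      (β1 - (α1 + β1 + μ1) * xb t + μ1 * xb t * x5 t + α1 * (xb t) ^ 2) t)
    (hxnd : ∀ t, tb ≤ t → HasDerivAt xn
      ((β1 - Δβ) - (α1 + (β1 - Δβ) + μ1) * xn t + μ1 * xn t * x5 t +
        α1 * (xn t) ^ 2) t)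
    (hLip : ∀ t, ∀ x ∈ Set.Icc (0 : ℝ) 1, ∀ y ∈ Set.Icc (0 : ℝ) 1,
      |(β1 - (α1 + β1 + μ1) * x + μ1 * x * x5 t + α1 * x ^ 2) -
        (β1 - (α1 + β1 + μ1) * y + μ1 * y * x5 t + α1 * y ^ 2)| ≤ L * |x - y|)
    (cbp : ℝ)
    (hrc : Tendsto (fun t => α1 * (2 * xb t - 1) - β1 + μ1 * (x5 t - 1))
      (nhdsWithin tb (Set.Ioi tb)) (nhds cbp))
    (hpos : 0 < cbp + Δβ / 2) :
    (∀ t, tb ≤ t → |xn t - xb t| ≤ (Δβ / L) * (Real.exp (L * (t - tb)) - 1)) ∧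
    ∃ δ > 0, ∀ t ∈ Set.Ioc tb (tb + δ),
      0 < α1 * (2 * xn t - 1) - (β1 - Δβ) + μ1 * (x5 t - 1) := by
  have part1 : ∀ t, tb ≤ t → |xn t - xb t| ≤ (Δβ / L) * (Real.exp (L * (t - tb)) - 1) := by
    intro t ht
    -- apply Grönwall on [tb, t] to v = xn - xb
    set v : ℝ → ℝ := fun s => xn s - xb s with hv
    set v' : ℝ → ℝ := fun s =>
      (((β1 - Δβ) - (α1 + (β1 - Δβ) + μ1) * xn s + μ1 * xn s * x5 s + α1 * (xn s) ^ 2) -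
        (β1 - (α1 + β1 + μ1) * xb s + μ1 * xb s * x5 s + α1 * (xb s) ^ 2)) with hv'
    have hcont : ContinuousOn v (Set.Icc tb t) := by
      intro s hs
      exact (((hxnd s hs.1).sub (hxbd s hs.1)).continuousAt).continuousWithinAt
    have hderiv : ∀ s ∈ Set.Ico tb t, HasDerivWithinAt v (v' s) (Set.Ici s) s := by
      intro s hs
      exact (((hxnd s hs.1).sub (hxbd s hs.1))).hasDerivWithinAt
    have hstart : ‖v tb‖ ≤ (0 : ℝ) := by
      simp [hv, hinit]
    have hbound : ∀ s ∈ Set.Ico tb t, ‖v' s‖ ≤ L * ‖v s‖ + Δβ := by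
      intro s hs
      have hxnI := hxnmem s hs.1
      have hxbI := hxbmem s hs.1
      have hlip := hLip s (xn s) hxnI (xb s) hxbI
      have hrw : v' s =
          ((β1 - (α1 + β1 + μ1) * xn s + μ1 * xn s * x5 s + α1 * (xn s) ^ 2) -
            (β1 - (α1 + β1 + μ1) * xb s + μ1 * xb s * x5 s + α1 * (xb s) ^ 2))
          + (-(Δβ * (1 - xn s))) := by
        simp only [hv']; ring
      have habs : |(-(Δβ * (1 - xn s)))| ≤ Δβ := by
        rw [abs_neg, abs_of_nonneg (by nlinarith [hxnI.1, hxnI.2])]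
        nlinarith [hxnI.1, hxnI.2]
      calc ‖v' s‖ ≤ |(β1 - (α1 + β1 + μ1) * xn s + μ1 * xn s * x5 s + α1 * (xn s) ^ 2) -
            (β1 - (α1 + β1 + μ1) * xb s + μ1 * xb s * x5 s + α1 * (xb s) ^ 2)|
            + |(-(Δβ * (1 - xn s)))| := by
              rw [Real.norm_eq_abs, hrw]; exact abs_add_le _ _
        _ ≤ L * ‖v s‖ + Δβ := by
              rw [Real.norm_eq_abs]
              exact add_le_add hlip habs
    have := norm_le_gronwallBound_of_norm_deriv_right_le hcont hderiv hstart hbound t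
      ⟨ht, le_refl t⟩
    rw [gronwallBound_of_K_ne_0 (ne_of_gt hL)] at this
    simpa [Real.norm_eq_abs, div_eq_div_iff] using this
  refine ⟨part1, ?_⟩
  -- part (ii)
  have hxbc : Tendsto xb (nhdsWithin tb (Set.Ioi tb)) (nhds (xb tb)) :=
    ((hxbd tb le_rfl).continuousAt.continuousWithinAt).tendsto
  have hxnc : Tendsto xn (nhdsWithin tb (Set.Ioi tb)) (nhds (xb tb)) := by
    have : Tendsto xn (nhdsWithin tb (Set.Ioi tb)) (nhds (xn tb)) :=
      ((hxnd tb le_rfl).continuousAt.continuousWithinAt).tendsto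
    rwa [hinit] at this
  have hdiff : Tendsto (fun t => xn t - xb t) (nhdsWithin tb (Set.Ioi tb)) (nhds 0) := by
    simpa using hxnc.sub hxbc
  have hcnew : Tendsto (fun t => α1 * (2 * xn t - 1) - (β1 - Δβ) + μ1 * (x5 t - 1))
      (nhdsWithin tb (Set.Ioi tb)) (nhds (cbp + Δβ)) := by
    have key : ∀ t, α1 * (2 * xn t - 1) - (β1 - Δβ) + μ1 * (x5 t - 1) =
        (α1 * (2 * xb t - 1) - β1 + μ1 * (x5 t - 1)) + Δβ + 2 * α1 * (xn t - xb t) := by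
      intro t; ring
    simp only [key]
    have : Tendsto (fun t => (α1 * (2 * xb t - 1) - β1 + μ1 * (x5 t - 1)) + Δβ
        + 2 * α1 * (xn t - xb t)) (nhdsWithin tb (Set.Ioi tb))
        (nhds (cbp + Δβ + 2 * α1 * 0)) :=
      ((hrc.add tendsto_const_nhds).add ((tendsto_const_nhds).mul hdiff))
    simpa using this
  have hev : ∀ᶠ t in nhdsWithin tb (Set.Ioi tb),
      0 < α1 * (2 * xn t - 1) - (β1 - Δβ) + μ1 * (x5 t - 1) :=
    hcnew.eventually (eventually_gt_nhds (by linarith))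
  rw [eventually_nhdsWithin_iff, Metric.eventually_nhds_iff] at hev
  obtain ⟨ε, hε, hball⟩ := hev
  refine ⟨ε / 2, by linarith, fun t ht => ?_⟩
  apply hball (y := t) ?_ ht.1
  rw [Real.dist_eq, abs_of_pos (by linarith [ht.1] : (0:ℝ) < t - tb)]
  linarith [ht.2]
end

section
/- Let T > 0, let x3 : [0,T] → ℝ be measurable and bounded, and let Ξ, ψ : [0,T] → ℝ be essentially bounded measurable functions. For 0 ≤ r ≤ t ≤ T and a bounded measurable θ define I_θ(t,r) := ∫ᵣᵗ x3(s)·exp(∫ᵣˢ θ(u) du) ds. Then for every 0 ≤ r ≤ t ≤ T, the limit lim_{ε→0} (I_{Ξ+ε·ψ}(t,r) − I_Ξ(t,r))/ε exists and equals ∫ᵣᵗ ψ(u)·exp(∫ᵣᵘ Ξ(v) dv)·I_Ξ(t,u) du. -/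
/-!
Write `A(s) = ∫ᵣˢ Ξ` and `B(s) = ∫ᵣˢ ψ`, so that the perturbed integral is
`∫ᵣᵗ x3(s) e^{A(s) + ε B(s)} ds`. Since `A` and `B` are continuous on `[r, t]`, the
`ε`-derivative of the integrand is dominated by a constant multiple of `|x3|` for `|ε| ≤ 1`,
so one may differentiate under the integral sign and obtain `∫ᵣᵗ x3(s) e^{A(s)} B(s) ds`.
Expanding `B(s)` and exchanging the order of integration over the triangle `r ≤ u ≤ s ≤ t`
gives `∫ᵣᵗ ψ(u) ∫ᵤᵗ x3(s) e^{A(s)} ds du`, and `e^{A(s)} = e^{A(u)} e^{∫ᵤˢ Ξ}`.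
-/

open MeasureTheory intervalIntegral Set Real

theorem intervalIntegrable_of_norm_le {E : Type*} [NormedAddCommGroup E] {f : ℝ → E}
    {μ : Measure ℝ} [IsLocallyFiniteMeasure μ] {a b M : ℝ}
    (hf : AEStronglyMeasurable f (μ.restrict (uIcc a b))) (hM : ∀ x ∈ uIcc a b, ‖f x‖ ≤ M) :
    IntervalIntegrable f μ a b :=
  (IntegrableOn.of_bound measure_Icc_lt_top hf M
    (ae_restrict_of_forall_mem measurableSet_Icc hM)).intervalIntegrable

/-- Dirichlet's formula: both sides integrate `g s * h u` over the triangle `a < u ≤ s ≤ b`. -/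
theorem integral_mul_primitive_eq_integral_mul_integral {g h : ℝ → ℝ} {a b : ℝ} (hab : a ≤ b)
    (hg : IntervalIntegrable g volume a b) (hh : IntervalIntegrable h volume a b) :
    ∫ s in a..b, g s * ∫ u in a..s, h u = ∫ u in a..b, h u * ∫ s in u..b, g s := by
  set μ := volume.restrict (Ioc a b)
  set k : ℝ → ℝ → ℝ := fun s u => if u ≤ s then g s * h u else 0
  have hk : Integrable (Function.uncurry k) (μ.prod μ) := by
    have hprod : Integrable (fun p : ℝ × ℝ => g p.1 * h p.2) (μ.prod μ) :=
      (hg.1.mul_prod hh.1 :)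
    have hk_eq : Function.uncurry k = {p : ℝ × ℝ | p.2 ≤ p.1}.indicator fun p => g p.1 * h p.2 := by
      ext ⟨s, u⟩
      simp [k, Set.indicator_apply]
    rw [hk_eq]
    exact hprod.indicator (measurableSet_le measurable_snd measurable_fst)
  have hinner_u : ∀ s ∈ Ioc a b, ∫ u, k s u ∂μ = g s * ∫ u in a..s, h u := by
    intro s hs
    have hk_s : k s = (Iic s).indicator fun u => g s * h u := by
      ext u; simp [k, Set.indicator_apply]
    rw [hk_s, setIntegral_indicator measurableSet_Iic, Ioc_inter_Iic, min_eq_right hs.2,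
      MeasureTheory.integral_const_mul, integral_of_le hs.1.le]
  have hinner_s : ∀ u ∈ Ioc a b, ∫ s, k s u ∂μ = h u * ∫ s in u..b, g s := by
    intro u hu
    have hk_u : (fun s => k s u) = (Ici u).indicator fun s => g s * h u := by
      ext s; simp [k, Set.indicator_apply]
    have hIcc : Ioc a b ∩ Ici u = Icc u b := by
      ext s
      simp only [mem_inter_iff, mem_Ioc, mem_Ici, mem_Icc]
      grind
    rw [hk_u, setIntegral_indicator measurableSet_Ici, hIcc, integral_Icc_eq_integral_Ioc,
      MeasureTheory.integral_mul_const, integral_of_le hu.2, mul_comm]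
  rw [integral_of_le hab, integral_of_le hab, ← setIntegral_congr_fun measurableSet_Ioc hinner_u,
    ← setIntegral_congr_fun measurableSet_Ioc hinner_s]
  exact integral_integral_swap hk

theorem hasDerivAt_integral_mul_exp_add_mul {x A B : ℝ → ℝ} {μ : Measure ℝ} {a b ε₀ : ℝ}
    (hx : IntervalIntegrable x μ a b) (hA : ContinuousOn A (uIcc a b))
    (hB : ContinuousOn B (uIcc a b)) :
    HasDerivAt (fun ε => ∫ s in a..b, x s * exp (A s + ε * B s) ∂μ)
      (∫ s in a..b, x s * (exp (A s + ε₀ * B s) * B s) ∂μ) ε₀ := by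
  obtain ⟨MA, hMA⟩ := isCompact_uIcc.exists_bound_of_continuousOn hA
  obtain ⟨MB, hMB⟩ := isCompact_uIcc.exists_bound_of_continuousOn hB
  have hexp : ∀ ε, ContinuousOn (fun s => exp (A s + ε * B s)) (uIcc a b) := fun ε =>
    continuous_exp.comp_continuousOn (hA.add (hB.const_smul ε))
  have hmeas : ∀ ε, AEStronglyMeasurable (fun s => x s * exp (A s + ε * B s))
      (μ.restrict (uIoc a b)) := fun ε =>
    hx.def'.aestronglyMeasurable.mul
      (((hexp ε).aestronglyMeasurable measurableSet_uIcc).mono_set uIoc_subset_uIcc)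
  set C := exp (MA + (|ε₀| + 1) * MB) * MB
  have hbound : ∀ s ∈ uIoc a b, ∀ ε ∈ Metric.ball ε₀ 1,
      ‖x s * (exp (A s + ε * B s) * B s)‖ ≤ C * ‖x s‖ := by
    intro s hs ε hε
    have hAs := hMA s (uIoc_subset_uIcc hs)
    have hBs := hMB s (uIoc_subset_uIcc hs)
    have hε : |ε| ≤ |ε₀| + 1 := by
      have := abs_sub_abs_le_abs_sub ε ε₀
      rw [Metric.mem_ball, Real.dist_eq] at hε
      linarith
    have hexponent : A s + ε * B s ≤ MA + (|ε₀| + 1) * MB := by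
      rw [Real.norm_eq_abs] at hAs hBs
      have h1 : |ε * B s| ≤ (|ε₀| + 1) * MB := by
        rw [abs_mul]; exact mul_le_mul hε hBs (abs_nonneg _) (by positivity)
      linarith [le_abs_self (A s), le_abs_self (ε * B s)]
    rw [norm_mul, norm_mul, Real.norm_of_nonneg (exp_pos _).le, mul_comm C]
    exact mul_le_mul_of_nonneg_left
      (mul_le_mul (exp_le_exp.2 hexponent) hBs (norm_nonneg _) (exp_pos _).le) (norm_nonneg _)
  have hderiv := hasDerivAt_integral_of_dominated_loc_of_deriv_le
    (F' := fun ε s => x s * (exp (A s + ε * B s) * B s)) (bound := fun s => C * ‖x s‖)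
    (Metric.ball_mem_nhds ε₀ one_pos) (Filter.Eventually.of_forall hmeas)
    (hx.mul_continuousOn (hexp ε₀))
    (hx.mul_continuousOn ((hexp ε₀).mul hB)).def'.aestronglyMeasurable
    (Filter.Eventually.of_forall hbound) (hx.norm.const_mul C)
    (Filter.Eventually.of_forall fun s _ ε _ =>
      ((hasDerivAt_mul_const (B s)).const_add (A s)).exp.const_mul (x s))
  exact hderiv.2

theorem exp_integral_mul_integral_mul_exp_integral {x Ξ : ℝ → ℝ} {μ ν : Measure ℝ} {a b c : ℝ}
    (hab : IntervalIntegrable Ξ μ a b) (hbc : IntervalIntegrable Ξ μ b c) :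
    exp (∫ v in a..b, Ξ v ∂μ) * ∫ s in b..c, x s * exp (∫ v in b..s, Ξ v ∂μ) ∂ν
      = ∫ s in b..c, x s * exp (∫ v in a..s, Ξ v ∂μ) ∂ν := by
  rw [← intervalIntegral.integral_const_mul]
  refine integral_congr fun s hs => ?_
  rw [← integral_add_adjacent_intervals hab (hbc.mono_set (uIcc_subset_uIcc_left hs)), exp_add]
  ring

theorem msce_kernel_gateaux_general
    (T : ℝ) (x3 Ξ ψ : ℝ → ℝ)
    (hx3m : Measurable x3) (hx3b : ∃ M, ∀ t ∈ Set.Icc (0 : ℝ) T, |x3 t| ≤ M)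
    (hΞm : Measurable Ξ) (hΞb : ∃ M, ∀ t ∈ Set.Icc (0 : ℝ) T, |Ξ t| ≤ M)
    (hψm : Measurable ψ) (hψb : ∃ M, ∀ t ∈ Set.Icc (0 : ℝ) T, |ψ t| ≤ M) :
    ∀ r t : ℝ, 0 ≤ r → r ≤ t → t ≤ T →
      HasDerivAt
        (fun ε : ℝ => ∫ s in r..t, x3 s * Real.exp (∫ u in r..s, (Ξ u + ε * ψ u)))
        (∫ u in r..t, ψ u * Real.exp (∫ v in r..u, Ξ v) *
          (∫ s in u..t, x3 s * Real.exp (∫ v in u..s, Ξ v)))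
        0 := by
  intro r t hr hrt htT
  have hsub : uIcc r t ⊆ Icc 0 T := uIcc_subset_Icc ⟨hr, hrt.trans htT⟩ ⟨hr.trans hrt, htT⟩
  have hint : ∀ f : ℝ → ℝ, Measurable f → (∃ M, ∀ s ∈ Icc 0 T, |f s| ≤ M) →
      IntervalIntegrable f volume r t := fun f hf ⟨M, hM⟩ =>
    intervalIntegrable_of_norm_le hf.aestronglyMeasurable fun s hs => hM s (hsub hs)
  have hx3 := hint x3 hx3m hx3b
  have hΞ := hint Ξ hΞm hΞb
  have hψ := hint ψ hψm hψb
  have hA := continuousOn_primitive_interval' hΞ left_mem_uIcc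
  refine ((hasDerivAt_integral_mul_exp_add_mul hx3 hA
    (continuousOn_primitive_interval' hψ left_mem_uIcc)).congr_of_eventuallyEq
    (.of_forall fun ε => integral_congr fun s hs => ?_)).congr_deriv ?_
  · rw [integral_add (hΞ.mono_set (uIcc_subset_uIcc_left hs))
      ((hψ.mono_set (uIcc_subset_uIcc_left hs)).const_mul ε), intervalIntegral.integral_const_mul]
  calc ∫ s in r..t, x3 s * (exp ((∫ v in r..s, Ξ v) + 0 * ∫ v in r..s, ψ v) * ∫ v in r..s, ψ v)
      = ∫ s in r..t, x3 s * exp (∫ v in r..s, Ξ v) * ∫ u in r..s, ψ u := by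
        simp only [zero_mul, add_zero, mul_assoc]
    _ = ∫ u in r..t, ψ u * ∫ s in u..t, x3 s * exp (∫ v in r..s, Ξ v) :=
        integral_mul_primitive_eq_integral_mul_integral hrt
          (hx3.mul_continuousOn (continuous_exp.comp_continuousOn hA)) hψ
    _ = _ := integral_congr fun u hu => by
        rw [mul_assoc, exp_integral_mul_integral_mul_exp_integral
          (hΞ.mono_set (uIcc_subset_uIcc_left hu)) (hΞ.mono_set (uIcc_subset_uIcc_right hu))]

/-- Gâteaux derivative of the inner Volterra integral
`I_θ(t,r) = ∫_r^t x3(s) exp(∫_r^s θ)` of the MSCE-T kernel with respect to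
its exponent, in direction `ψ`:
`δI(t,r) = ∫_r^t ψ(u) e^{∫_r^u Ξ} I_Ξ(t,u) du`. -/
theorem msce_kernel_gateaux
    (T : ℝ) (hT : 0 < T) (x3 Ξ ψ : ℝ → ℝ)
    (hx3m : Measurable x3) (hx3b : ∃ M, ∀ t ∈ Set.Icc (0 : ℝ) T, |x3 t| ≤ M)
    (hΞm : Measurable Ξ) (hΞb : ∃ M, ∀ t ∈ Set.Icc (0 : ℝ) T, |Ξ t| ≤ M)
    (hψm : Measurable ψ) (hψb : ∃ M, ∀ t ∈ Set.Icc (0 : ℝ) T, |ψ t| ≤ M) :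
    ∀ r t : ℝ, 0 ≤ r → r ≤ t → t ≤ T →
      HasDerivAt
        (fun ε : ℝ => ∫ s in r..t, x3 s * Real.exp (∫ u in r..s, (Ξ u + ε * ψ u)))
        (∫ u in r..t, ψ u * Real.exp (∫ v in r..u, Ξ v) *
          (∫ s in u..t, x3 s * Real.exp (∫ v in u..s, Ξ v)))
        0 :=
  msce_kernel_gateaux_general T x3 Ξ ψ hx3m hx3b hΞm hΞb hψm hψb
end

section
/- Let T > 0, let c, δc : [0,T] → ℝ be bounded measurable, and let g : [0,T] → ℝ be integrable. For ε ∈ ℝ define x_{4,ε}(t) := ∫₀ᵗ exp(∫ₛᵗ (c(u) + ε·δc(u)) du)·g(s) ds, and write x4 := x_{4,0}. Then for every t ∈ [0,T], the map ε ↦ x_{4,ε}(t) is differentiable at ε = 0 with derivative δx4(t) = ∫₀ᵗ Φ_c(t,s)·δc(s)·x4(s) ds, where Φ_c(t,s) := exp(∫ₛᵗ c(u) du). -/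
/-!
Write `A s = ∫ₛᵗ c` and `B s = ∫ₛᵗ δc`, so that `x_{4,ε}(t) = ∫₀ᵗ exp (ε B s) · exp (A s) g s ds`.
Since `B` is continuous, hence bounded, on `[0, t]`, one may differentiate under the integral sign,
and the derivative at `ε = 0` is `∫₀ᵗ B s · exp (A s) g s ds`. Writing `B s` as an integral over
`u ∈ (s, t]` and exchanging the order of integration over the triangle `s < u` turns this into
`∫₀ᵗ δc u ∫₀ᵘ exp (A s) g s ds du`, and `exp (A s) = Φ_c(t,u) Φ_c(u,s)` gives the stated form.
-/

open MeasureTheory intervalIntegral Set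

theorem integrableOn_of_forall_abs_le {α : Type*} [MeasurableSpace α] {μ : Measure α}
    {s : Set α} {f : α → ℝ} (hs : MeasurableSet s) (hμs : μ s ≠ ⊤)
    (hf : AEStronglyMeasurable f μ) (hbdd : ∃ M, ∀ x ∈ s, |f x| ≤ M) : IntegrableOn f s μ := by
  obtain ⟨M, hM⟩ := hbdd
  exact Measure.integrableOn_of_bounded hμs hf (ae_restrict_of_forall_mem hs hM)

theorem integral_tail_mul_eq_integral_mul_primitive {a b : ℝ} (hab : a ≤ b) {f h : ℝ → ℝ}
    (hf : IntervalIntegrable f volume a b) (hh : IntervalIntegrable h volume a b) :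
    ∫ s in a..b, (∫ u in s..b, f u) * h s = ∫ u in a..b, f u * ∫ s in a..u, h s := by
  rw [integral_of_le hab, integral_of_le hab]
  rw [intervalIntegrable_iff_integrableOn_Ioc_of_le hab] at hf hh
  set μ := volume.restrict (Ioc a b)
  let Φ : ℝ → ℝ → ℝ := fun s u =>
    {p : ℝ × ℝ | p.1 < p.2}.indicator (fun p => h p.1 * f p.2) (s, u)
  have hΦ : Integrable (Function.uncurry Φ) (μ.prod μ) :=
    (hh.mul_prod hf).indicator (measurableSet_lt measurable_fst measurable_snd)
  have inner_u : ∀ s ∈ Ioc a b, ∫ u, Φ s u ∂μ = (∫ u in s..b, f u) * h s := by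
    intro s hs
    have hΦs : Φ s = (Ioi s).indicator (fun u => h s * f u) := by
      ext u; simp [Φ, indicator_apply]
    rw [hΦs, MeasureTheory.integral_indicator measurableSet_Ioi,
      Measure.restrict_restrict measurableSet_Ioi, inter_comm, Ioc_inter_Ioi, max_eq_right hs.1.le,
      MeasureTheory.integral_const_mul, ← integral_of_le hs.2, mul_comm]
  have inner_s : ∀ u ∈ Ioc a b, ∫ s, Φ s u ∂μ = f u * ∫ s in a..u, h s := by
    intro u hu
    have hΦu : (Φ · u) = (Iio u).indicator (fun s => h s * f u) := by
      ext s; simp [Φ, indicator_apply]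
    have hset : Iio u ∩ Ioc a b = Ioo a u := by
      ext s; simp only [mem_inter_iff, mem_Iio, mem_Ioc, mem_Ioo]
      constructor
      · rintro ⟨hsu, has, -⟩; exact ⟨has, hsu⟩
      · rintro ⟨has, hsu⟩; exact ⟨hsu, has, hsu.le.trans hu.2⟩
    rw [hΦu, MeasureTheory.integral_indicator measurableSet_Iio,
      Measure.restrict_restrict measurableSet_Iio, hset, MeasureTheory.integral_mul_const,
      ← integral_Ioc_eq_integral_Ioo, ← integral_of_le hu.1.le, mul_comm]
  calc ∫ s in Ioc a b, (∫ u in s..b, f u) * h s = ∫ s, ∫ u, Φ s u ∂μ ∂μ :=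
        (setIntegral_congr_fun measurableSet_Ioc inner_u).symm
    _ = ∫ u, ∫ s, Φ s u ∂μ ∂μ := integral_integral_swap hΦ
    _ = ∫ u in Ioc a b, f u * ∫ s in a..u, h s := setIntegral_congr_fun measurableSet_Ioc inner_s

theorem integral_tail_mul_exp_integral_mul_eq {a t : ℝ} (hat : a ≤ t) {c f g : ℝ → ℝ}
    (hc : IntegrableOn c (uIcc a t)) (hf : IntervalIntegrable f volume a t)
    (hg : IntervalIntegrable (fun s => Real.exp (∫ u in s..t, c u) * g s) volume a t) :
    ∫ s in a..t, (∫ u in s..t, f u) * (Real.exp (∫ u in s..t, c u) * g s) =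
      ∫ s in a..t, Real.exp (∫ u in s..t, c u) * f s *
        ∫ r in a..s, Real.exp (∫ u in r..s, c u) * g r := by
  rw [integral_tail_mul_eq_integral_mul_primitive hat hf hg]
  refine integral_congr fun s hs => ?_
  rw [mul_comm (Real.exp _) (f s), mul_assoc,
    ← intervalIntegral.integral_const_mul (Real.exp (∫ u in s..t, c u))]
  congr 1
  refine integral_congr fun r hr => ?_
  have hr' : r ∈ uIcc a t := uIcc_subset_uIcc left_mem_uIcc hs hr
  have hsplit : ∫ u in r..t, c u = (∫ u in r..s, c u) + ∫ u in s..t, c u :=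
    (integral_add_adjacent_intervals (hc.mono_set (uIcc_subset_uIcc hr' hs)).intervalIntegrable
      (hc.mono_set (uIcc_subset_uIcc hs right_mem_uIcc)).intervalIntegrable).symm
  rw [hsplit, Real.exp_add]
  ring

theorem hasDerivAt_integral_exp_mul_mul {a b x₀ : ℝ} {B h : ℝ → ℝ}
    (hB : ContinuousOn B (uIcc a b)) (hh : IntervalIntegrable h volume a b) :
    HasDerivAt (fun x => ∫ s in a..b, Real.exp (x * B s) * h s)
      (∫ s in a..b, B s * Real.exp (x₀ * B s) * h s) x₀ := by
  obtain ⟨K, hK⟩ := isCompact_uIcc.exists_bound_of_continuousOn hB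
  have hexp : ∀ x, ContinuousOn (fun s => Real.exp (x * B s)) (uIcc a b) := fun x =>
    Real.continuous_exp.comp_continuousOn (continuousOn_const.mul hB)
  refine (hasDerivAt_integral_of_dominated_loc_of_deriv_le (Metric.ball_mem_nhds x₀ one_pos)
    (F' := fun x s => B s * Real.exp (x * B s) * h s)
    (bound := fun s => K * Real.exp ((|x₀| + 1) * K) * |h s|)
    (.of_forall fun x => (hh.continuousOn_mul (hexp x)).def'.aestronglyMeasurable)
    (hh.continuousOn_mul (hexp x₀))
    (hh.continuousOn_mul (g := fun s => B s * Real.exp (x₀ * B s))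
      (hB.mul (hexp x₀))).def'.aestronglyMeasurable
    ?_ (hh.norm.const_mul _) ?_).2
  · refine .of_forall fun s hs x hx => ?_
    have hBs : |B s| ≤ K := hK s (uIoc_subset_uIcc hs)
    have hx : |x| ≤ |x₀| + 1 := by
      have := abs_sub_abs_le_abs_sub x x₀
      rw [Metric.mem_ball, Real.dist_eq] at hx
      linarith
    have hxB : x * B s ≤ (|x₀| + 1) * K :=
      calc x * B s ≤ |x| * |B s| := (le_abs_self _).trans (abs_mul _ _).le
        _ ≤ (|x₀| + 1) * K := mul_le_mul hx hBs (abs_nonneg _) (by positivity)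
    rw [Real.norm_eq_abs, abs_mul, abs_mul, Real.abs_exp]
    gcongr
    exact (abs_nonneg _).trans hBs
  · exact .of_forall fun s _ x _ =>
      ((hasDerivAt_mul_const (B s)).exp.mul_const (h s)).congr_deriv (by ring)

theorem msce_c_first_variation_general
    (T : ℝ) (c δc g : ℝ → ℝ)
    (hcm : Measurable c) (hcb : ∃ M, ∀ t ∈ Set.Icc (0 : ℝ) T, |c t| ≤ M)
    (hδcm : Measurable δc) (hδcb : ∃ M, ∀ t ∈ Set.Icc (0 : ℝ) T, |δc t| ≤ M)
    (hg : IntervalIntegrable g volume 0 T) :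
    ∀ t ∈ Set.Icc (0 : ℝ) T,
      HasDerivAt
        (fun ε : ℝ => ∫ s in (0 : ℝ)..t,
          Real.exp (∫ u in s..t, (c u + ε * δc u)) * g s)
        (∫ s in (0 : ℝ)..t, Real.exp (∫ u in s..t, c u) * δc s *
          (∫ r in (0 : ℝ)..s, Real.exp (∫ u in r..s, c u) * g r))
        0 := by
  intro t ⟨ht0, htT⟩
  have hsub : uIcc 0 t ⊆ Icc 0 T := uIcc_subset_Icc ⟨le_rfl, ht0.trans htT⟩ ⟨ht0, htT⟩
  have integrableOn_of_bdd : ∀ f : ℝ → ℝ, Measurable f → (∃ M, ∀ t ∈ Icc 0 T, |f t| ≤ M) →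
      IntegrableOn f (uIcc 0 t) := fun f hfm hfb =>
    (integrableOn_of_forall_abs_le measurableSet_Icc measure_Icc_lt_top.ne
      hfm.aestronglyMeasurable hfb).mono_set hsub
  have hc := integrableOn_of_bdd c hcm hcb
  have hδc := integrableOn_of_bdd δc hδcm hδcb
  have hh : IntervalIntegrable (fun s => Real.exp (∫ u in s..t, c u) * g s) volume 0 t :=
    (hg.mono_set (by rwa [uIcc_of_le (ht0.trans htT)])).continuousOn_mul
      (Real.continuous_exp.comp_continuousOn (continuousOn_primitive_interval_left hc))
  convert hasDerivAt_integral_exp_mul_mul (x₀ := 0)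
    (continuousOn_primitive_interval_left hδc) hh using 1
  · funext ε
    refine integral_congr fun s hs => ?_
    have hst := uIcc_subset_uIcc hs right_mem_uIcc
    rw [integral_add (hc.mono_set hst).intervalIntegrable
      ((hδc.mono_set hst).intervalIntegrable.const_mul ε), intervalIntegral.integral_const_mul,
      Real.exp_add]
    ring
  · simp only [zero_mul, Real.exp_zero, mul_one]
    exact (integral_tail_mul_exp_integral_mul_eq ht0 hc hδc.intervalIntegrable hh).symm

/-- First variation of `x4` under a perturbation of the coefficient `c`:
with `x_{4,ε}(t) = ∫_0^t exp(∫_s^t (c + ε δc)) g(s) ds`, the map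
`ε ↦ x_{4,ε}(t)` is differentiable at `ε = 0` with derivative
`δx4(t) = ∫_0^t Φ_c(t,s) δc(s) x4(s) ds`. -/
theorem msce_c_first_variation
    (T : ℝ) (hT : 0 < T) (c δc g : ℝ → ℝ)
    (hcm : Measurable c) (hcb : ∃ M, ∀ t ∈ Set.Icc (0 : ℝ) T, |c t| ≤ M)
    (hδcm : Measurable δc) (hδcb : ∃ M, ∀ t ∈ Set.Icc (0 : ℝ) T, |δc t| ≤ M)
    (hg : IntervalIntegrable g volume 0 T) :
    ∀ t ∈ Set.Icc (0 : ℝ) T,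
      HasDerivAt
        (fun ε : ℝ => ∫ s in (0 : ℝ)..t,
          Real.exp (∫ u in s..t, (c u + ε * δc u)) * g s)
        (∫ s in (0 : ℝ)..t, Real.exp (∫ u in s..t, c u) * δc s *
          (∫ r in (0 : ℝ)..s, Real.exp (∫ u in r..s, c u) * g r))
        0 :=
  msce_c_first_variation_general T c δc g hcm hcb hδcm hδcb hg
end
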